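/- Let (X, L, sigma) be an automatic structure for a semigroupoid S, and suppose L ⊆ K ⊆ X^+ with K \ L finite. Then (X, K, sigma) is an automatic structure for S. -/

import Mathlib

/- Common framework: graphs, path languages, synchronous regularity,
   semigroupoids, automatic structures, and Rees matrix constructions. -/

namespace AutoRees

/-- Raw data of a semigroupoid: source and target maps on arrows together with a
totalised multiplication (whose values are only meaningful on composable pairs). -/
structure PreSgpd (O A : Type) where
  src : A → O
  tgt : A → O
  mul : A → A → A

/-- A semigroupoid: the multiplication respects sources and targets and is
associative, on composable pairs. -/
structure Sgpd (O A : Type) extends PreSgpd O A where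
  src_mul : ∀ e f, tgt e = src f → src (mul e f) = src e
  tgt_mul : ∀ e f, tgt e = src f → tgt (mul e f) = tgt f
  mul_assoc' : ∀ e f g, tgt e = src f → tgt f = src g →
    mul (mul e f) g = mul e (mul f g)

/-- Evaluate a nonempty word of edge labels as a product in the semigroupoid
(`none` on the empty word). -/
def evalPath? {O A E : Type} (S : PreSgpd O A) (lab : E → A) : List E → Option A
  | [] => none
  | e :: l => some ((l.map lab).foldl S.mul (lab e))

/-- The consecutive-compatibility condition making a list of edges a path. -/
def IsPathChain {V E : Type} (esrc etgt : E → V) (l : List E) : Prop :=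
  List.Chain' (fun e f => etgt e = esrc f) l

/-- The target of a non-empty path. -/
def pathTgt? {V E : Type} (etgt : E → V) (l : List E) : Option V :=
  l.getLast?.map etgt

/-- The source of a non-empty path. -/
def pathSrc? {V E : Type} (esrc : E → V) (l : List E) : Option V :=
  l.head?.map esrc

/-- A set of words is regular if it is a regular language in the usual sense. -/
def IsRegularSet {α : Type} (L : Set (List α)) : Prop :=
  Language.IsRegular (show Language α from L)

/-- The padding symbol used to pad a pair of paths, at the target of `l`
(the letters of the padded alphabet `X^$` are `Sum.inl` (a genuine edge) or
`Sum.inr (some v)` (the padding edge at vertex `v`)). -/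
def padSym {V E : Type} (etgt : E → V) (l : List E) : E ⊕ Option V :=
  Sum.inr (l.getLast?.map etgt)

/-- The padded convolution `(a, b) δ_X` of a pair of paths. -/
def deltaPair {V E : Type} (etgt : E → V) (a b : List E) :
    List ((E ⊕ Option V) × (E ⊕ Option V)) :=
  (a.map Sum.inl).zip (b.map Sum.inl) ++
    (if a.length ≤ b.length
      then (b.drop a.length).map (fun e => (padSym etgt a, Sum.inl e))
      else (a.drop b.length).map (fun e => (Sum.inl e, padSym etgt b)))

/-- A binary relation on paths is synchronously regular if its image under the
padding map is a regular language over the padded product alphabet. -/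
def SyncRegular {V E : Type} (etgt : E → V) (R : Set (List E × List E)) : Prop :=
  IsRegularSet { w | ∃ p ∈ R, w = deltaPair etgt p.1 p.2 }

/-- A choice of representatives `(X, K, ρ)` for a semigroupoid `S`: a graph `X`
with vertex set `S^0` (edge set `E`, source `esrc`, target `etgt`), a semigroupoid
morphism `ρ : X^+ → S` (induced by the edge-labelling `lab`), and a language `K`
of non-empty paths with `K ρ = S^1`. -/
structure ChoiceOfReps {O A : Type} (S : PreSgpd O A) (E : Type) where
  esrc : E → O
  etgt : E → O
  lab : E → A
  lab_src : ∀ e, S.src (lab e) = esrc e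
  lab_tgt : ∀ e, S.tgt (lab e) = etgt e
  K : Set (List E)
  K_path : ∀ l ∈ K, l ≠ [] ∧ IsPathChain esrc etgt l
  K_onto : ∀ a : A, ∃ l ∈ K, evalPath? S lab l = some a

variable {O A E : Type} {S : PreSgpd O A}

/-- The relation `K_=` = {(u,v) ∈ K × K : u ρ = v ρ}. -/
def relEq (C : ChoiceOfReps S E) : Set (List E × List E) :=
  { p | p.1 ∈ C.K ∧ p.2 ∈ C.K ∧ evalPath? S C.lab p.1 = evalPath? S C.lab p.2 }

/-- The relation `K_a` for an edge `a` of `X`. -/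
def relEdge (C : ChoiceOfReps S E) (a : E) : Set (List E × List E) :=
  { p | p.1 ∈ C.K ∧ p.2 ∈ C.K ∧ pathTgt? C.etgt p.1 = some (C.esrc a) ∧
        evalPath? S C.lab (p.1 ++ [a]) = evalPath? S C.lab p.2 }

/-- The relation `K_a` for a vertex `a` of `X` (regarded as the empty path at `a`). -/
def relVertex (C : ChoiceOfReps S E) (v : O) : Set (List E × List E) :=
  { p | p.1 ∈ C.K ∧ p.2 ∈ C.K ∧ pathTgt? C.etgt p.1 = some v ∧
        evalPath? S C.lab p.1 = evalPath? S C.lab p.2 }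

/-- An automatic structure: a finitely generated choice of representatives with
`K` regular such that `K_a` is synchronously regular for every edge and vertex. -/
def IsAutomaticStructure (C : ChoiceOfReps S E) : Prop :=
  Finite E ∧ IsRegularSet C.K ∧
    (∀ a : E, SyncRegular C.etgt (relEdge C a)) ∧
    (∀ v : O, SyncRegular C.etgt (relVertex C v))

/-- The set of non-empty prefixes of words in `K`. -/
def prefs {E : Type} (K : Set (List E)) : Set (List E) :=
  { p | p ≠ [] ∧ ∃ l ∈ K, p <+: l }

/-- The relation `K'_=` = {(u,v) ∈ K × Pref(K) : u ρ = v ρ}. -/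
def relPrefEq (C : ChoiceOfReps S E) : Set (List E × List E) :=
  { p | p.1 ∈ C.K ∧ p.2 ∈ prefs C.K ∧ evalPath? S C.lab p.1 = evalPath? S C.lab p.2 }

/-- A prefix-automatic structure. -/
def IsPrefixAutomaticStructure (C : ChoiceOfReps S E) : Prop :=
  IsAutomaticStructure C ∧ SyncRegular C.etgt (relPrefEq C)

/-- A cross-section: `ρ` restricted to `K` is injective. -/
def IsCrossSection (C : ChoiceOfReps S E) : Prop :=
  ∀ u ∈ C.K, ∀ v ∈ C.K, evalPath? S C.lab u = evalPath? S C.lab v → u = v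

/-- `K` is closed under taking non-empty prefixes. -/
def IsPrefixClosed (C : ChoiceOfReps S E) : Prop :=
  ∀ l ∈ C.K, ∀ p : List E, p ≠ [] → p <+: l → p ∈ C.K

/-- A semigroupoid (or semigroup, in the one-object case) is automatic if it
admits an automatic structure. -/
def IsAutomatic (S : PreSgpd O A) : Prop :=
  ∃ (E : Type) (C : ChoiceOfReps S E), IsAutomaticStructure C

/-- Prefix-automaticity. -/
def IsPrefixAutomatic (S : PreSgpd O A) : Prop :=
  ∃ (E : Type) (C : ChoiceOfReps S E), IsPrefixAutomaticStructure C

/-- Finite generation: every arrow is a (composable) product of arrows from some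
fixed finite set. -/
def IsFG (S : PreSgpd O A) : Prop :=
  ∃ T : Set A, T.Finite ∧ ∀ a : A, ∃ l : List A, l ≠ [] ∧ (∀ x ∈ l, x ∈ T) ∧
    IsPathChain S.src S.tgt l ∧ evalPath? S id l = some a

/-- An arrow is an identity if it acts as an identity on all composable products. -/
def IsIdentity (S : PreSgpd O A) (e : A) : Prop :=
  (∀ x, S.tgt e = S.src x → S.mul e x = x) ∧ (∀ y, S.tgt y = S.src e → S.mul y e = y)

/-- A small category is a semigroupoid with an identity arrow at every object. -/
def IsSmallCategory (S : PreSgpd O A) : Prop :=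
  ∀ v : O, ∃ e : A, S.src e = v ∧ S.tgt e = v ∧ IsIdentity S e

/-- No object is isolated. -/
def IsolationFree (S : PreSgpd O A) : Prop :=
  ∀ v : O, ∃ a : A, S.src a = v ∨ S.tgt a = v

namespace Rees

variable {O A I Λ : Type}

/-- A triple `(i, x, λ)` is valid if `i F = x α` and `x ω = λ G`. -/
def Valid (S : Sgpd O A) (F : I → O) (G : Λ → O) (t : I × A × Λ) : Prop :=
  F t.1 = S.src t.2.1 ∧ S.tgt t.2.1 = G t.2.2

/-- The set of valid Rees triples. -/
def Triples (S : Sgpd O A) (F : I → O) (G : Λ → O) : Type :=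
  { t : I × A × Λ // Valid S F G t }

theorem prod_valid (S : Sgpd O A) {F : I → O} {G : Λ → O}
    {i : I} {x : A} {lam : Λ} {j : I} {y : A} {mu : Λ} {p : A}
    (hx : Valid S F G (i, x, lam)) (hy : Valid S F G (j, y, mu))
    (hps : S.src p = G lam) (hpt : S.tgt p = F j) :
    Valid S F G (i, S.mul (S.mul x p) y, mu) := by
  obtain ⟨hx1, hx2⟩ := hx
  obtain ⟨hy1, hy2⟩ := hy
  have h1 : S.tgt x = S.src p := by rw [hps]; exact hx2
  have h2 : S.tgt p = S.src y := by rw [hpt]; exact hy1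
  have h3 : S.tgt (S.mul x p) = S.src y := by rw [S.tgt_mul x p h1]; exact h2
  constructor
  · show F i = S.src (S.mul (S.mul x p) y)
    rw [S.src_mul _ y h3, S.src_mul x p h1]; exact hx1
  · show S.tgt (S.mul (S.mul x p) y) = G mu
    rw [S.tgt_mul _ y h3]; exact hy2

/-- Data for a Rees matrix construction with zero over a semigroupoid `S`:
indexing functions `F`, `G` surjective onto the sets of sources and of targets
respectively, and a sandwich matrix `P` with entries in `S^1 ∪ {0}`
(`none` representing `0`) compatible with `F` and `G`. -/
structure Data0 (S : Sgpd O A) (I Λ : Type) where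
  F : I → O
  G : Λ → O
  P : Λ → I → Option A
  F_into : ∀ i, ∃ a : A, S.src a = F i
  F_onto : ∀ a : A, ∃ i, F i = S.src a
  G_into : ∀ lam, ∃ a : A, S.tgt a = G lam
  G_onto : ∀ a : A, ∃ lam, G lam = S.tgt a
  P_src : ∀ lam i p, P lam i = some p → S.src p = G lam
  P_tgt : ∀ lam i p, P lam i = some p → S.tgt p = F i

/-- Underlying set of the Rees matrix semigroup with zero (`none` is the zero). -/
def Carrier0 (S : Sgpd O A) (R : Data0 S I Λ) : Type :=
  Option (Triples S R.F R.G)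

/-- Multiplication of the Rees matrix semigroup with zero. -/
def mul0 (S : Sgpd O A) (R : Data0 S I Λ) :
    Carrier0 S R → Carrier0 S R → Carrier0 S R
  | some ⟨(i, x, lam), hx⟩, some ⟨(j, y, mu), hy⟩ =>
    match hp : R.P lam j with
    | some p => some ⟨(i, S.mul (S.mul x p) y, mu),
        prod_valid S hx hy (R.P_src lam j p hp) (R.P_tgt lam j p hp)⟩
    | none => none
  | none, _ => none
  | _, none => none

/-- The Rees matrix semigroup with zero `M^0(S; F(I), G(Λ); P)`, as a
one-object semigroupoid (i.e. a semigroup). -/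
def pre0 (S : Sgpd O A) (R : Data0 S I Λ) : PreSgpd Unit (Carrier0 S R) where
  src _ := ()
  tgt _ := ()
  mul := mul0 S R

/-- Data for a Rees matrix construction without zero (no zero entries in `P`). -/
structure Data (S : Sgpd O A) (I Λ : Type) where
  F : I → O
  G : Λ → O
  P : Λ → I → A
  F_into : ∀ i, ∃ a : A, S.src a = F i
  F_onto : ∀ a : A, ∃ i, F i = S.src a
  G_into : ∀ lam, ∃ a : A, S.tgt a = G lam
  G_onto : ∀ a : A, ∃ lam, G lam = S.tgt a
  P_src : ∀ lam i, S.src (P lam i) = G lam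
  P_tgt : ∀ lam i, S.tgt (P lam i) = F i

/-- Underlying set of the Rees matrix semigroup without zero. -/
def Carrier (S : Sgpd O A) (R : Data S I Λ) : Type :=
  Triples S R.F R.G

/-- Multiplication of the Rees matrix semigroup without zero. -/
def mul (S : Sgpd O A) (R : Data S I Λ) :
    Carrier S R → Carrier S R → Carrier S R
  | ⟨(i, x, lam), hx⟩, ⟨(j, y, mu), hy⟩ =>
    ⟨(i, S.mul (S.mul x (R.P lam j)) y, mu),
      prod_valid S hx hy (R.P_src lam j) (R.P_tgt lam j)⟩

/-- The Rees matrix semigroup without zero `M(S; F(I), G(Λ); P)`, as a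
one-object semigroupoid (i.e. a semigroup). -/
def pre (S : Sgpd O A) (R : Data S I Λ) : PreSgpd Unit (Carrier S R) where
  src _ := ()
  tgt _ := ()
  mul := mul S R

/-- The set `S P' S` of arrows of the form `s p t` with `p` a non-zero entry of `P`. -/
def SPS0 (S : Sgpd O A) (R : Data0 S I Λ) : Set A :=
  { a | ∃ s p t lam i, R.P lam i = some p ∧ S.tgt s = S.src p ∧ S.tgt p = S.src t ∧
        a = S.mul (S.mul s p) t }

/-- The set `S P S` for a matrix without zero entries. -/
def SPS (S : Sgpd O A) (R : Data S I Λ) : Set A :=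
  { a | ∃ s t lam i, S.tgt s = S.src (R.P lam i) ∧ S.tgt (R.P lam i) = S.src t ∧
        a = S.mul (S.mul s (R.P lam i)) t }

/-- The set of targets of arrows of `S` (the codomain of `G`). -/
def tgtSet (S : Sgpd O A) : Set O := { v | ∃ a : A, S.tgt a = v }

/-- `T` is strongly right-ideal-generated by a row cross-section of `P`. -/
def StronglyRIG0 (S : Sgpd O A) (R : Data0 S I Λ) (T : Set A) : Prop :=
  ∃ Λ' : Set Λ, Set.BijOn R.G Λ' (tgtSet S) ∧
    ∀ t ∈ T, ∃ lam ∈ Λ', ∃ i p s, R.P lam i = some p ∧ S.tgt p = S.src s ∧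
      t = S.mul p s

/-- `T` is weakly right-ideal-generated by a row cross-section of `P`. -/
def WeaklyRIG0 (S : Sgpd O A) (R : Data0 S I Λ) (T : Set A) : Prop :=
  ∃ Λ' : Set Λ, Set.BijOn R.G Λ' (tgtSet S) ∧
    ∀ t ∈ T, ∃ lam ∈ Λ', ∃ i p, R.P lam i = some p ∧
      (t = p ∨ ∃ s, S.tgt p = S.src s ∧ t = S.mul p s)

/-- Weak right-ideal generation, for a matrix without zero entries. -/
def WeaklyRIG (S : Sgpd O A) (R : Data S I Λ) (T : Set A) : Prop :=
  ∃ Λ' : Set Λ, Set.BijOn R.G Λ' (tgtSet S) ∧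
    ∀ t ∈ T, ∃ lam ∈ Λ', ∃ i,
      (t = R.P lam i ∨ ∃ s, S.tgt (R.P lam i) = S.src s ∧ t = S.mul (R.P lam i) s)

end Rees


section Toolbox

theorem isRegularSet_def {α : Type} {L : Set (List α)} :
    IsRegularSet L ↔ ∃ σ : Type, ∃ _ : Fintype σ, ∃ M : DFA α σ, ∀ w, w ∈ M.accepts ↔ w ∈ L := by
  constructor
  · rintro ⟨σ, i, M, h⟩
    exact ⟨σ, i, M, fun w => by rw [h]; exact Iff.rfl⟩
  · rintro ⟨σ, i, M, h⟩
    exact ⟨σ, i, M, Set.ext h⟩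

theorem reg_congr {α : Type} {L M : Set (List α)} (h : IsRegularSet L) (e : L = M) :
    IsRegularSet M := e ▸ h

theorem reg_empty {α : Type} : IsRegularSet (∅ : Set (List α)) := by
  rw [isRegularSet_def]
  refine ⟨Unit, inferInstance, ⟨fun _ _ => (), (), ∅⟩, fun w => ?_⟩
  simp [DFA.mem_accepts]

theorem reg_nil {α : Type} : IsRegularSet ({[]} : Set (List α)) := by
  rw [isRegularSet_def]
  refine ⟨Bool, inferInstance, ⟨fun _ _ => false, true, {true}⟩, fun w => ?_⟩
  have key : ∀ (l : List α), List.foldl (fun (_ : Bool) (_ : α) => false) false l = false := by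
    intro l; induction l with
    | nil => rfl
    | cons a l ih => simpa using ih
  simp only [DFA.mem_accepts]
  cases w with
  | nil => simp [DFA.eval, DFA.evalFrom]
  | cons a l =>
    simp only [DFA.eval, DFA.evalFrom, List.foldl_cons]
    rw [key]
    refine iff_of_false (fun h => ?_) (fun h => ?_)
    · exact Bool.false_ne_true (Set.mem_singleton_iff.mp h)
    · exact List.cons_ne_nil a l (Set.mem_singleton_iff.mp h)

theorem reg_union {α : Type} {L M : Set (List α)} (hL : IsRegularSet L) (hM : IsRegularSet M) :
    IsRegularSet (L ∪ M) := by
  rw [isRegularSet_def] at hL hM ⊢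
  obtain ⟨σ, iσ, P, hP⟩ := hL
  obtain ⟨τ, iτ, Q, hQ⟩ := hM
  refine ⟨σ × τ, inferInstance, ⟨fun s a => (P.step s.1 a, Q.step s.2 a), (P.start, Q.start),
    {s | s.1 ∈ P.accept ∨ s.2 ∈ Q.accept}⟩, fun w => ?_⟩
  have key : ∀ (l : List α) (s : σ) (t : τ),
      List.foldl (fun (p : σ × τ) a => (P.step p.1 a, Q.step p.2 a)) (s, t) l
        = (P.evalFrom s l, Q.evalFrom t l) := by
    intro l
    induction l with
    | nil => intro s t; rfl
    | cons a l ih => intro s t; simpa [DFA.evalFrom] using ih (P.step s a) (Q.step t a)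
  rw [DFA.mem_accepts]
  show List.foldl _ (P.start, Q.start) w ∈ _ ↔ _
  rw [key]
  have h1 := (hP w).symm
  have h2 := (hQ w).symm
  rw [DFA.mem_accepts] at h1 h2
  constructor
  · rintro (h | h)
    · exact Or.inl (h1.mpr h)
    · exact Or.inr (h2.mpr h)
  · rintro (h | h)
    · exact Or.inl (h1.mp h)
    · exact Or.inr (h2.mp h)

theorem reg_prepend {α : Type} (a : α) {M : Set (List α)} (hM : IsRegularSet M) :
    IsRegularSet {l | ∃ r ∈ M, l = a :: r} := by
  classical
  rw [isRegularSet_def] at hM ⊢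
  obtain ⟨σ, iσ, P, hP⟩ := hM
  refine ⟨Bool ⊕ σ, inferInstance,
    ⟨fun s b => match s with
      | Sum.inl true => if b = a then Sum.inr P.start else Sum.inl false
      | Sum.inl false => Sum.inl false
      | Sum.inr s => Sum.inr (P.step s b),
     Sum.inl true, Sum.inr '' P.accept⟩, fun w => ?_⟩
  set D : DFA α (Bool ⊕ σ) := ⟨fun s b => match s with
      | Sum.inl true => if b = a then Sum.inr P.start else Sum.inl false
      | Sum.inl false => Sum.inl false
      | Sum.inr s => Sum.inr (P.step s b),
     Sum.inl true, Sum.inr '' P.accept⟩ with hD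
  have hdead : ∀ (l : List α), D.evalFrom (Sum.inl false) l = Sum.inl false := by
    intro l; induction l with
    | nil => rfl
    | cons b l ih => simpa [DFA.evalFrom, hD] using ih
  have hsim : ∀ (l : List α) (s : σ), D.evalFrom (Sum.inr s) l = Sum.inr (P.evalFrom s l) := by
    intro l
    induction l with
    | nil => intro s; rfl
    | cons b l ih => intro s; simpa [DFA.evalFrom, hD] using ih (P.step s b)
  rw [DFA.mem_accepts]
  cases w with
  | nil =>
    simp only [DFA.eval, DFA.evalFrom_nil]
    refine iff_of_false (fun h => ?_) (fun h => ?_)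
    · obtain ⟨s, _, hs⟩ := h
      exact absurd hs (by simp [hD])
    · obtain ⟨r, _, hr⟩ := h
      exact List.cons_ne_nil _ _ hr.symm
  | cons b l =>
    have hstep : D.eval (b :: l) = D.evalFrom (D.step (Sum.inl true) b) l := rfl
    by_cases hba : b = a
    · subst hba
      have hst : D.step (Sum.inl true) b = Sum.inr P.start := by simp [hD]
      rw [hstep, hst, hsim]
      constructor
      · rintro ⟨s, hs, hseq⟩
        refine ⟨l, ?_, rfl⟩
        have he : P.evalFrom P.start l = s := by injection hseq.symm
        refine (hP l).mp ?_
        rw [DFA.mem_accepts]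
        show P.evalFrom P.start l ∈ _
        rw [he]; exact hs
      · rintro ⟨r, hr, hreq⟩
        have hl : l = r := by injection hreq
        subst hl
        have := (hP l).mpr hr
        rw [DFA.mem_accepts] at this
        exact ⟨P.eval l, this, rfl⟩
    · have hst : D.step (Sum.inl true) b = Sum.inl false := by simp [hD, hba]
      rw [hstep, hst, hdead]
      refine iff_of_false (fun h => ?_) (fun h => ?_)
      · obtain ⟨s, _, hs⟩ := h
        exact absurd hs (by simp)
      · obtain ⟨r, _, hr⟩ := h
        injection hr with h1 h2
        exact hba h1

theorem reg_prependWord {α : Type} (w : List α) {M : Set (List α)} (hM : IsRegularSet M) :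
    IsRegularSet {l | ∃ r ∈ M, l = w ++ r} := by
  induction w with
  | nil => exact reg_congr hM (by ext l; simp)
  | cons a w ih =>
    refine reg_congr (reg_prepend a ih) ?_
    ext l
    simp only [Set.mem_setOf_eq, List.cons_append]
    constructor
    · rintro ⟨r, ⟨r', hr', rfl⟩, rfl⟩; exact ⟨r', hr', rfl⟩
    · rintro ⟨r, hr, rfl⟩; exact ⟨w ++ r, ⟨r, hr, rfl⟩, rfl⟩

theorem reg_deriv {α : Type} (w : List α) {L : Set (List α)} (hL : IsRegularSet L) :
    IsRegularSet {l | w ++ l ∈ L} := by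
  rw [isRegularSet_def] at hL ⊢
  obtain ⟨σ, iσ, P, hP⟩ := hL
  refine ⟨σ, iσ, ⟨P.step, P.eval w, P.accept⟩, fun l => ?_⟩
  rw [DFA.mem_accepts]
  have h1 : (⟨P.step, P.eval w, P.accept⟩ : DFA α σ).eval l = P.evalFrom (P.eval w) l := rfl
  rw [h1]
  show P.evalFrom (P.evalFrom P.start w) l ∈ _ ↔ _
  rw [← DFA.evalFrom_of_append]
  rw [Set.mem_setOf_eq, ← hP, DFA.mem_accepts]
  exact Iff.rfl

theorem reg_comap {α β : Type} (f : α → β) {L : Set (List β)} (hL : IsRegularSet L) :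
    IsRegularSet {l : List α | l.map f ∈ L} := by
  rw [isRegularSet_def] at hL ⊢
  obtain ⟨σ, iσ, P, hP⟩ := hL
  refine ⟨σ, iσ, P.comap f, fun w => ?_⟩
  rw [DFA.mem_accepts, Set.mem_setOf_eq, ← hP, DFA.mem_accepts]
  simp

theorem reg_biUnion {α ι : Type} {s : Set ι} (hs : s.Finite) {f : ι → Set (List α)}
    (h : ∀ i ∈ s, IsRegularSet (f i)) : IsRegularSet (⋃ i ∈ s, f i) := by
  have key : (∀ i ∈ s, IsRegularSet (f i)) → IsRegularSet (⋃ i ∈ s, f i) := by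
    refine Set.Finite.induction_on (motive := fun s _ => (∀ i ∈ s, IsRegularSet (f i)) → IsRegularSet (⋃ i ∈ s, f i)) s hs (fun _ => reg_congr reg_empty (by simp)) ?_
    intro a s' ha hs' ih hyp
    refine reg_congr (reg_union (hyp a (by simp)) (ih (fun j hj => hyp j (by simp [hj])))) ?_
    simp [Set.biUnion_insert]
  exact key h

theorem reg_finite {α : Type} {L : Set (List α)} (hL : L.Finite) : IsRegularSet L := by
  have : L = ⋃ w ∈ L, {w} := by simp
  refine reg_congr (reg_biUnion hL (fun w _ => ?_)) this.symm
  refine reg_congr (reg_prependWord w reg_nil) ?_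
  ext l; simp

theorem reg_map {α β : Type} (f : α → β) (hf : Function.Injective f) {M : Set (List α)}
    (hM : IsRegularSet M) : IsRegularSet {w : List β | ∃ l ∈ M, w = l.map f} := by
  classical
  rw [isRegularSet_def] at hM ⊢
  obtain ⟨σ, iσ, P, hP⟩ := hM
  let g : β → Option α := fun b => if h : ∃ a, f a = b then some h.choose else none
  have hg : ∀ a, g (f a) = some a := by
    intro a
    have h : ∃ a', f a' = f a := ⟨a, rfl⟩
    simp only [g, dif_pos h]
    exact congrArg some (hf h.choose_spec)
  refine ⟨Option σ, inferInstance,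
    ⟨fun s? b => s?.bind (fun s => (g b).map (P.step s)), some P.start, some '' P.accept⟩,
    fun w => ?_⟩
  set D : DFA β (Option σ) :=
    ⟨fun s? b => s?.bind (fun s => (g b).map (P.step s)), some P.start, some '' P.accept⟩ with hD
  have hdead : ∀ (l : List β), D.evalFrom none l = none := by
    intro l; induction l with
    | nil => rfl
    | cons b l ih => simpa [DFA.evalFrom, hD] using ih
  have hsim : ∀ (l : List α) (s : σ), D.evalFrom (some s) (l.map f) = some (P.evalFrom s l) := by
    intro l
    induction l with
    | nil => intro s; rfl
    | cons a l ih =>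
      intro s
      have : D.step (some s) (f a) = some (P.step s a) := by
        simp [hD, hg a]
      show D.evalFrom (D.step (some s) (f a)) (l.map f) = _
      rw [this, ih]
      rfl
  have hrange : ∀ (l : List β) (s : σ) (t : σ), D.evalFrom (some s) l = some t →
      ∃ l' : List α, l = l'.map f := by
    intro l
    induction l with
    | nil => intro s t _; exact ⟨[], rfl⟩
    | cons b l ih =>
      intro s t hev
      have hstep : D.evalFrom (D.step (some s) b) l = some t := hev
      cases hgb : g b with
      | none =>
        have : D.step (some s) b = none := by simp [hD, hgb]
        rw [this, hdead] at hstep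
        exact absurd hstep.symm (Option.some_ne_none _)
      | some a =>
        have hfa : f a = b := by
          by_cases h : ∃ a', f a' = b
          · have : g b = some h.choose := by simp [g, dif_pos h]
            rw [this] at hgb
            injection hgb with h'
            rw [← h']
            exact h.choose_spec
          · simp [g, dif_neg h] at hgb
        have : D.step (some s) b = some (P.step s a) := by simp [hD, hgb]
        rw [this] at hstep
        obtain ⟨l', rfl⟩ := ih _ _ hstep
        exact ⟨a :: l', by rw [← hfa]; rfl⟩
  rw [DFA.mem_accepts]
  constructor
  · intro h
    obtain ⟨t, ht, hteq⟩ := h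
    obtain ⟨l, rfl⟩ := hrange w P.start t hteq.symm
    refine ⟨l, ?_, rfl⟩
    refine (hP l).mp ?_
    rw [DFA.mem_accepts]
    have h2 : some (P.evalFrom P.start l) = some t := by
      rw [← hsim l P.start]
      exact hteq.symm
    have h3 : P.evalFrom P.start l = t := by injection h2
    show P.evalFrom P.start l ∈ _
    rw [h3]; exact ht
  · rintro ⟨l, hl, rfl⟩
    show D.evalFrom (some P.start) (l.map f) ∈ _
    rw [hsim]
    have := (hP l).mpr hl
    rw [DFA.mem_accepts] at this
    exact ⟨P.eval l, this, rfl⟩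

end Toolbox

section Delta

variable {V E : Type}

private theorem takeWhile_append_eq {α : Type} (p : α → Bool) :
    ∀ (l1 l2 : List α), (∀ x ∈ l1, p x = true) → (∀ x ∈ l2, p x = false) →
      (l1 ++ l2).takeWhile p = l1
  | [], l2, _, h2 => by
    cases l2 with
    | nil => rfl
    | cons b t => simp [List.takeWhile_cons, h2 b (by simp)]
  | a :: l1, l2, h1, h2 => by
    have ih := takeWhile_append_eq p l1 l2 (fun x hx => h1 x (by simp [hx])) h2
    simp [List.takeWhile_cons, h1 a (by simp), ih]

private theorem map_fst_zip_take {γ δ : Type} :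
    ∀ (l1 : List γ) (l2 : List δ), (l1.zip l2).map Prod.fst = l1.take l2.length
  | [], _ => by simp
  | _ :: _, [] => by simp
  | a :: t1, b :: t2 => by simp [map_fst_zip_take t1 t2]

theorem dp_fst (etgt : E → V) (a b : List E) :
    ((deltaPair etgt a b).map Prod.fst).takeWhile Sum.isLeft = a.map Sum.inl := by
  unfold deltaPair
  rw [List.map_append]
  by_cases h : a.length ≤ b.length
  · rw [if_pos h]
    rw [List.map_fst_zip (by simpa using h), List.map_map]
    refine takeWhile_append_eq _ _ _ ?_ ?_
    · intro x hx
      obtain ⟨e, _, rfl⟩ := List.mem_map.mp hx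
      rfl
    · intro x hx
      obtain ⟨e, _, rfl⟩ := List.mem_map.mp hx
      rfl
  · rw [if_neg h]
    rw [map_fst_zip_take, List.map_map]
    have h2 : (List.map (Prod.fst ∘ fun e => ((Sum.inl e : E ⊕ Option V), padSym etgt b)) (a.drop b.length))
        = (a.map (Sum.inl : E → E ⊕ Option V)).drop b.length := by
      rw [← List.map_drop]
      rfl
    rw [h2, List.length_map, List.take_append_drop]
    have key : ∀ (l : List (E ⊕ Option V)), (∀ x ∈ l, Sum.isLeft x = true) →
        l.takeWhile Sum.isLeft = l := by
      intro l hl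
      induction l with
      | nil => rfl
      | cons x t ih =>
        simp [List.takeWhile_cons, hl x (by simp), ih (fun y hy => hl y (by simp [hy]))]
    refine key _ ?_
    intro x hx
    obtain ⟨e, _, rfl⟩ := List.mem_map.mp hx
    rfl

theorem dp_swap (etgt : E → V) (a b : List E) :
    (deltaPair etgt a b).map Prod.swap = deltaPair etgt b a := by
  unfold deltaPair
  rw [List.map_append, List.zip_swap]
  congr 1
  rcases lt_trichotomy a.length b.length with h | h | h
  · rw [if_pos h.le, if_neg (not_le.mpr h), List.map_map]
    rfl
  · have h1 : b.drop a.length = [] := by rw [h, List.drop_length]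
    have h2 : a.drop b.length = [] := by rw [← h, List.drop_length]
    rw [if_pos h.le, if_pos h.ge, h1, h2]
    rfl
  · rw [if_neg (not_le.mpr h), if_pos h.le, List.map_map]
    rfl

theorem dp_inj {etgt : E → V} {a b a' b' : List E}
    (h : deltaPair etgt a b = deltaPair etgt a' b') : a = a' ∧ b = b' := by
  have h1 : a.map (Sum.inl : E → E ⊕ Option V) = a'.map Sum.inl := by
    rw [← dp_fst etgt a b, ← dp_fst etgt a' b', h]
  have hsw : deltaPair etgt b a = deltaPair etgt b' a' := by
    rw [← dp_swap etgt a b, ← dp_swap etgt a' b', h]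
  have h2 : b.map (Sum.inl : E → E ⊕ Option V) = b'.map Sum.inl := by
    rw [← dp_fst etgt b a, ← dp_fst etgt b' a', hsw]
  exact ⟨List.map_injective_iff.mpr Sum.inl_injective h1,
    List.map_injective_iff.mpr Sum.inl_injective h2⟩

theorem dp_long (etgt : E → V) {u w : List E} (r : List E) (h : u.length = w.length) :
    deltaPair etgt u (w ++ r) =
      (u.map Sum.inl).zip (w.map Sum.inl) ++ r.map (fun g => (padSym etgt u, Sum.inl g)) := by
  unfold deltaPair
  have hlen : u.length ≤ (w ++ r).length := by simp [h]
  rw [if_pos hlen]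
  congr 1
  · rw [List.map_append]
    have := List.zip_append (l₁ := u.map (Sum.inl : E → E ⊕ Option V))
      (r₁ := ([] : List (E ⊕ Option V)))
      (l₂ := w.map (Sum.inl : E → E ⊕ Option V)) (r₂ := r.map Sum.inl) (by simp [h])
    simpa using this
  · rw [h, List.drop_left]

end Delta


section Main

variable {V E : Type}

private theorem pad_inj (etgt : E → V) (u : List E) :
    Function.Injective (fun g : E => ((padSym etgt u, Sum.inl g) :
      (E ⊕ Option V) × (E ⊕ Option V))) := by
  intro x y hxy
  simpa using hxy

theorem reg_imgLeft [Finite E] (etgt : E → V) (u : List E) {M : Set (List E)}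
    (hM : IsRegularSet M) :
    IsRegularSet {w | ∃ v ∈ M, w = deltaPair etgt u v} := by
  classical
  set n := u.length with hn
  set Z : List E → List ((E ⊕ Option V) × (E ⊕ Option V)) :=
    fun w0 => (u.map Sum.inl).zip (w0.map Sum.inl) with hZ
  have split : {w | ∃ v ∈ M, w = deltaPair etgt u v} =
      ((fun v => deltaPair etgt u v) '' {v | v ∈ M ∧ v.length < n}) ∪
      (⋃ w0 ∈ {w0 : List E | w0.length = n},
        {w | ∃ r ∈ {r | w0 ++ r ∈ M},
          w = Z w0 ++ r.map (fun g => (padSym etgt u, Sum.inl g))}) := by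
    ext w
    constructor
    · rintro ⟨v, hv, rfl⟩
      by_cases hlen : v.length < n
      · exact Or.inl ⟨v, ⟨hv, hlen⟩, rfl⟩
      · have hle : n ≤ v.length := le_of_not_gt hlen
        refine Or.inr (Set.mem_biUnion (show (v.take n).length = n by
          simp [hle, Set.mem_setOf_eq]) ?_)
        refine ⟨v.drop n, by simp [Set.mem_setOf_eq, List.take_append_drop, hv], ?_⟩
        have hq : u.length = (v.take n).length := by rw [List.length_take]; omega
        have := dp_long etgt (u := u) (w := v.take n) (v.drop n) hq
        rw [List.take_append_drop] at this
        rw [this]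
    · rintro (⟨v, ⟨hv, _⟩, rfl⟩ | hmem)
      · exact ⟨v, hv, rfl⟩
      · simp only [Set.mem_iUnion, Set.mem_setOf_eq] at hmem
        obtain ⟨w0, hw0, r, hr, rfl⟩ := hmem
        exact ⟨w0 ++ r, hr, (dp_long etgt r (by rw [hw0])).symm⟩
  refine reg_congr (reg_union (reg_finite ?_) (reg_biUnion (List.finite_length_eq E n) ?_))
    split.symm
  · exact Set.Finite.image _ ((List.finite_length_lt E n).subset (fun v hv => hv.2))
  · intro w0 _
    have h1 : IsRegularSet {r | w0 ++ r ∈ M} := reg_deriv w0 hM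
    have h2 := reg_map _ (pad_inj etgt u) h1
    have h3 := reg_prependWord (Z w0) h2
    refine reg_congr h3 ?_
    ext w
    simp only [Set.mem_setOf_eq]
    constructor
    · rintro ⟨x, ⟨r, hr, rfl⟩, rfl⟩; exact ⟨r, hr, rfl⟩
    · rintro ⟨r, hr, rfl⟩; exact ⟨_, ⟨r, hr, rfl⟩, rfl⟩

theorem reg_slice [Finite E] (etgt : E → V) (u : List E)
    {L : Set (List ((E ⊕ Option V) × (E ⊕ Option V)))} (hL : IsRegularSet L) :
    IsRegularSet {v : List E | deltaPair etgt u v ∈ L} := by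
  classical
  set n := u.length with hn
  set Z : List E → List ((E ⊕ Option V) × (E ⊕ Option V)) :=
    fun w0 => (u.map Sum.inl).zip (w0.map Sum.inl) with hZ
  have split : {v : List E | deltaPair etgt u v ∈ L} =
      {v : List E | v.length < n ∧ deltaPair etgt u v ∈ L} ∪
      (⋃ w0 ∈ {w0 : List E | w0.length = n},
        {v | ∃ r ∈ {r | Z w0 ++ r.map (fun g => (padSym etgt u, Sum.inl g)) ∈ L},
          v = w0 ++ r}) := by
    ext v
    constructor
    · intro hv
      by_cases hlen : v.length < n
      · exact Or.inl ⟨hlen, hv⟩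
      · have hle : n ≤ v.length := le_of_not_gt hlen
        refine Or.inr (Set.mem_biUnion (show (v.take n).length = n by
          simp [hle, Set.mem_setOf_eq]) ?_)
        refine ⟨v.drop n, ?_, (List.take_append_drop n v).symm⟩
        have hq : u.length = (v.take n).length := by rw [List.length_take]; omega
        have hdp := dp_long etgt (u := u) (w := v.take n) (v.drop n) hq
        rw [List.take_append_drop] at hdp
        rw [Set.mem_setOf_eq, ← hdp]
        exact hv
    · rintro (hv | hmem)
      · exact hv.2
      · simp only [Set.mem_iUnion, Set.mem_setOf_eq] at hmem
        obtain ⟨w0, hw0, r, hr, rfl⟩ := hmem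
        rw [Set.mem_setOf_eq, dp_long etgt r (by rw [hw0])]
        exact hr
  refine reg_congr (reg_union (reg_finite ?_) (reg_biUnion (List.finite_length_eq E n) ?_))
    split.symm
  · exact (List.finite_length_lt E n).subset (fun v hv => hv.1)
  · intro w0 _
    have h1 := reg_deriv (Z w0) hL
    have h2 := reg_comap (fun g : E => ((padSym etgt u, Sum.inl g) :
      (E ⊕ Option V) × (E ⊕ Option V))) h1
    exact reg_prependWord w0 h2

theorem reg_imgRight [Finite E] (etgt : E → V) (v : List E) {M : Set (List E)}
    (hM : IsRegularSet M) :
    IsRegularSet {w | ∃ u ∈ M, w = deltaPair etgt u v} := by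
  refine reg_congr (reg_comap Prod.swap (reg_imgLeft etgt v hM)) ?_
  ext w
  simp only [Set.mem_setOf_eq]
  constructor
  · rintro ⟨u, hu, hmap⟩
    refine ⟨u, hu, ?_⟩
    have hc := congrArg (List.map Prod.swap) hmap
    rw [List.map_map, dp_swap] at hc
    simpa [Prod.swap_swap_eq] using hc
  · rintro ⟨u, hu, rfl⟩
    exact ⟨u, hu, dp_swap etgt u v⟩

theorem reg_sliceRight [Finite E] (etgt : E → V) (u0 : List E)
    {L : Set (List ((E ⊕ Option V) × (E ⊕ Option V)))} (hL : IsRegularSet L) :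
    IsRegularSet {v : List E | deltaPair etgt v u0 ∈ L} := by
  refine reg_congr (reg_slice etgt u0 (reg_comap Prod.swap hL)) ?_
  ext v
  simp only [Set.mem_setOf_eq]
  rw [dp_swap]

end Main


section Assemble

variable {O A E : Type} {S : PreSgpd O A}

theorem evalPath?_isSome {lab : E → A} {l : List E} (hl : l ≠ []) :
    ∃ c, evalPath? S lab l = some c := by
  cases l with
  | nil => exact absurd rfl hl
  | cons e t => exact ⟨_, rfl⟩

theorem pathTgt?_isSome (etgt : E → O) {l : List E} (hl : l ≠ []) :
    ∃ w, pathTgt? etgt l = some w := by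
  refine ⟨etgt (l.getLast hl), ?_⟩
  unfold pathTgt?
  rw [List.getLast?_eq_getLast hl]
  rfl

theorem reg_evalSlice [Finite E] (C : ChoiceOfReps S E)
    (hvert : ∀ v : O, SyncRegular C.etgt (relVertex C v)) (c : A) :
    IsRegularSet {v | v ∈ C.K ∧ evalPath? S C.lab v = some c} := by
  obtain ⟨u0, hu0K, hu0e⟩ := C.K_onto c
  have hu0ne : u0 ≠ [] := (C.K_path u0 hu0K).1
  obtain ⟨w0, hw0⟩ := pathTgt?_isSome C.etgt hu0ne
  refine reg_congr (reg_slice C.etgt u0 (hvert w0)) ?_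
  ext v
  simp only [Set.mem_setOf_eq]
  constructor
  · rintro ⟨p, ⟨hA, hB, hT, hE⟩, heq⟩
    obtain ⟨h1, h2⟩ := dp_inj heq
    rw [← h1, ← h2] at hE
    rw [hu0e] at hE
    exact ⟨h2 ▸ hB, hE.symm⟩
  · rintro ⟨hvK, hve⟩
    exact ⟨(u0, v), ⟨hu0K, hvK, hw0, by rw [hu0e, hve]⟩, rfl⟩

theorem reg_edgeSliceFst [Finite E] (C : ChoiceOfReps S E)
    (hedge : ∀ a : E, SyncRegular C.etgt (relEdge C a)) (a : E) (c : A) :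
    IsRegularSet {u | u ∈ C.K ∧ pathTgt? C.etgt u = some (C.esrc a) ∧
      evalPath? S C.lab (u ++ [a]) = some c} := by
  obtain ⟨u0, hu0K, hu0e⟩ := C.K_onto c
  refine reg_congr (reg_sliceRight C.etgt u0 (hedge a)) ?_
  ext u
  simp only [Set.mem_setOf_eq]
  constructor
  · rintro ⟨p, ⟨hA, hB, hT, hE⟩, heq⟩
    obtain ⟨h1, h2⟩ := dp_inj heq
    rw [← h1, ← h2] at hE
    rw [hu0e] at hE
    exact ⟨h1 ▸ hA, h1 ▸ hT, hE⟩
  · rintro ⟨hu, hT, hE⟩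
    exact ⟨(u, u0), ⟨hu, hu0K, hT, by rw [hE, hu0e]⟩, rfl⟩

theorem reg_vertSliceFst [Finite E] (C : ChoiceOfReps S E)
    (hvert : ∀ v : O, SyncRegular C.etgt (relVertex C v)) (w : O) (c : A) :
    IsRegularSet {u | u ∈ C.K ∧ pathTgt? C.etgt u = some w ∧
      evalPath? S C.lab u = some c} := by
  obtain ⟨u0, hu0K, hu0e⟩ := C.K_onto c
  refine reg_congr (reg_sliceRight C.etgt u0 (hvert w)) ?_
  ext u
  simp only [Set.mem_setOf_eq]
  constructor
  · rintro ⟨p, ⟨hA, hB, hT, hE⟩, heq⟩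
    obtain ⟨h1, h2⟩ := dp_inj heq
    rw [← h1, ← h2] at hE
    rw [hu0e] at hE
    exact ⟨h1 ▸ hA, h1 ▸ hT, hE⟩
  · rintro ⟨hu, hT, hE⟩
    exact ⟨(u, u0), ⟨hu, hu0K, hT, by rw [hE, hu0e]⟩, rfl⟩

theorem sync_extend {V : Type} [Finite E] (etgt : E → V) (Q : List E × List E → Prop)
    {L K : Set (List E)} (hsub : L ⊆ K) (hfin : (K \ L).Finite)
    (hR : IsRegularSet {w | ∃ p ∈ {p : List E × List E | p.1 ∈ L ∧ p.2 ∈ L ∧ Q p},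
      w = deltaPair etgt p.1 p.2})
    (hleft : ∀ u ∈ K \ L, IsRegularSet {v | v ∈ K ∧ Q (u, v)})
    (hright : ∀ v ∈ K \ L, IsRegularSet {u | u ∈ L ∧ Q (u, v)}) :
    IsRegularSet {w | ∃ p ∈ {p : List E × List E | p.1 ∈ K ∧ p.2 ∈ K ∧ Q p},
      w = deltaPair etgt p.1 p.2} := by
  have split : {w | ∃ p ∈ {p : List E × List E | p.1 ∈ K ∧ p.2 ∈ K ∧ Q p},
      w = deltaPair etgt p.1 p.2} =
      ({w | ∃ p ∈ {p : List E × List E | p.1 ∈ L ∧ p.2 ∈ L ∧ Q p},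
        w = deltaPair etgt p.1 p.2} ∪
       ⋃ u ∈ K \ L, {w | ∃ v ∈ {v | v ∈ K ∧ Q (u, v)}, w = deltaPair etgt u v}) ∪
      ⋃ v ∈ K \ L, {w | ∃ u ∈ {u | u ∈ L ∧ Q (u, v)}, w = deltaPair etgt u v} := by
    ext w
    constructor
    · rintro ⟨⟨p1, p2⟩, ⟨h1, h2, hQ⟩, rfl⟩
      by_cases hp1 : p1 ∈ L
      · by_cases hp2 : p2 ∈ L
        · exact Or.inl (Or.inl ⟨(p1, p2), ⟨hp1, hp2, hQ⟩, rfl⟩)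
        · exact Or.inr (Set.mem_biUnion ⟨h2, hp2⟩ ⟨p1, ⟨hp1, hQ⟩, rfl⟩)
      · exact Or.inl (Or.inr (Set.mem_biUnion ⟨h1, hp1⟩ ⟨p2, ⟨h2, hQ⟩, rfl⟩))
    · rintro ((⟨p, ⟨h1, h2, hQ⟩, rfl⟩ | hm) | hm)
      · exact ⟨p, ⟨hsub h1, hsub h2, hQ⟩, rfl⟩
      · simp only [Set.mem_iUnion, Set.mem_setOf_eq] at hm
        obtain ⟨u, hu, v, ⟨hvK, hQ⟩, rfl⟩ := hm
        exact ⟨(u, v), ⟨hu.1, hvK, hQ⟩, rfl⟩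
      · simp only [Set.mem_iUnion, Set.mem_setOf_eq] at hm
        obtain ⟨v, hv, u, ⟨huL, hQ⟩, rfl⟩ := hm
        exact ⟨(u, v), ⟨hsub huL, hv.1, hQ⟩, rfl⟩
  refine reg_congr (reg_union (reg_union hR
    (reg_biUnion hfin (fun u hu => reg_imgLeft etgt u (hleft u hu))))
    (reg_biUnion hfin (fun v hv => reg_imgRight etgt v (hright v hv)))) split.symm

end Assemble


/-- Lemma 3.4: enlarging the language of an automatic structure by finitely many
non-empty paths yields an automatic structure. -/
theorem stmt_5 {O A E : Type} (S : Sgpd O A) (C : ChoiceOfReps S.toPreSgpd E)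
    (hC : IsAutomaticStructure C)
    (K : Set (List E)) (hsub : C.K ⊆ K) (hfin : (K \ C.K).Finite)
    (hpaths : ∀ l ∈ K, l ≠ [] ∧ IsPathChain C.esrc C.etgt l) :
    IsAutomaticStructure
      { esrc := C.esrc, etgt := C.etgt, lab := C.lab,
        lab_src := C.lab_src, lab_tgt := C.lab_tgt,
        K := K, K_path := hpaths,
        K_onto := fun a => by
          obtain ⟨l, hl, he⟩ := C.K_onto a
          exact ⟨l, hsub hl, he⟩ } := by
  obtain ⟨hfinE, hregK, hedge, hvert⟩ := hC
  haveI : Finite E := hfinE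
  refine ⟨hfinE, ?_, ?_, ?_⟩
  · exact reg_congr (reg_union hregK (reg_finite hfin)) (Set.union_diff_cancel hsub)
  · intro a
    refine sync_extend C.etgt
      (fun p => pathTgt? C.etgt p.1 = some (C.esrc a) ∧
        evalPath? S.toPreSgpd C.lab (p.1 ++ [a]) = evalPath? S.toPreSgpd C.lab p.2)
      hsub hfin (hedge a) ?_ ?_
    · intro u hu
      by_cases htgt : pathTgt? C.etgt u = some (C.esrc a)
      · obtain ⟨c, hc⟩ := evalPath?_isSome (S := S.toPreSgpd) (lab := C.lab)
          (l := u ++ [a]) (by simp)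
        refine reg_congr (reg_union (reg_evalSlice C hvert c)
          (reg_finite (L := {x | x ∈ K \ C.K ∧ pathTgt? C.etgt u = some (C.esrc a) ∧
              evalPath? S.toPreSgpd C.lab (u ++ [a]) = evalPath? S.toPreSgpd C.lab x})
            (hfin.subset (fun v hv => hv.1)))) ?_
        ext v
        simp only [Set.mem_setOf_eq, Set.mem_union]
        constructor
        · rintro (⟨hvK, hve⟩ | ⟨hvD, hQ⟩)
          · exact ⟨hsub hvK, htgt, by rw [hc, hve]⟩
          · exact ⟨hvD.1, hQ⟩
        · rintro ⟨hvK, hT, hE⟩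
          by_cases hvc : v ∈ C.K
          · refine Or.inl ⟨hvc, ?_⟩
            rw [hc] at hE
            exact hE.symm
          · exact Or.inr ⟨⟨hvK, hvc⟩, hT, hE⟩
      · refine reg_congr reg_empty (Eq.symm (Set.eq_empty_of_forall_notMem ?_))
        rintro v ⟨_, hT, _⟩
        exact htgt hT
    · intro v hv
      have hvne : v ≠ [] := (hpaths v hv.1).1
      obtain ⟨c, hc⟩ := evalPath?_isSome (S := S.toPreSgpd) (lab := C.lab) hvne
      refine reg_congr (reg_edgeSliceFst C hedge a c) ?_
      ext u
      simp only [Set.mem_setOf_eq]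
      constructor
      · rintro ⟨hu, hT, hE⟩
        exact ⟨hu, hT, by rw [hE, hc]⟩
      · rintro ⟨hu, hT, hE⟩
        exact ⟨hu, hT, hE.trans hc⟩
  · intro w
    refine sync_extend C.etgt
      (fun p => pathTgt? C.etgt p.1 = some w ∧
        evalPath? S.toPreSgpd C.lab p.1 = evalPath? S.toPreSgpd C.lab p.2)
      hsub hfin (hvert w) ?_ ?_
    · intro u hu
      by_cases htgt : pathTgt? C.etgt u = some w
      · have hune : u ≠ [] := (hpaths u hu.1).1
        obtain ⟨c, hc⟩ := evalPath?_isSome (S := S.toPreSgpd) (lab := C.lab) hune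
        refine reg_congr (reg_union (reg_evalSlice C hvert c)
          (reg_finite (L := {x | x ∈ K \ C.K ∧ pathTgt? C.etgt u = some w ∧
              evalPath? S.toPreSgpd C.lab u = evalPath? S.toPreSgpd C.lab x})
            (hfin.subset (fun x hx => hx.1)))) ?_
        ext v
        simp only [Set.mem_setOf_eq, Set.mem_union]
        constructor
        · rintro (⟨hvK, hve⟩ | ⟨hvD, hQ⟩)
          · exact ⟨hsub hvK, htgt, by rw [hc, hve]⟩
          · exact ⟨hvD.1, hQ⟩
        · rintro ⟨hvK, hT, hE⟩
          by_cases hvc : v ∈ C.K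
          · refine Or.inl ⟨hvc, ?_⟩
            rw [hc] at hE
            exact hE.symm
          · exact Or.inr ⟨⟨hvK, hvc⟩, hT, hE⟩
      · refine reg_congr reg_empty (Eq.symm (Set.eq_empty_of_forall_notMem ?_))
        rintro v ⟨_, hT, _⟩
        exact htgt hT
    · intro v hv
      have hvne : v ≠ [] := (hpaths v hv.1).1
      obtain ⟨c, hc⟩ := evalPath?_isSome (S := S.toPreSgpd) (lab := C.lab) hvne
      refine reg_congr (reg_vertSliceFst C hvert w c) ?_
      ext u
      simp only [Set.mem_setOf_eq]
      constructor
      · rintro ⟨hu, hT, hE⟩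
        exact ⟨hu, hT, by rw [hE, hc]⟩
      · rintro ⟨hu, hT, hE⟩
        exact ⟨hu, hT, hE.trans hc⟩


end AutoRees
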